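/- Let A, B be bounded linear operators on a complex Hilbert space H. If AA* ≤ k² BB* for some k ≥ 0, then the range of A is contained in the range of B. -/
import Mathlib

open ContinuousLinearMap
open scoped InnerProductSpace

/-- **Douglas theorem, (iii) ⇒ (i)**: majorization implies range inclusion. -/
theorem douglas_majorization_implies_range_subset
    {H : Type*} [NormedAddCommGroup H] [InnerProductSpace ℂ H] [CompleteSpace H]
    (A B : H →L[ℂ] H) (k : ℝ) (hk : 0 ≤ k)
    (h : (((k : ℂ) ^ 2) • (B ∘L adjoint B) - A ∘L adjoint A).IsPositive) :
    Set.range A ⊆ Set.range B := by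
  set S := adjoint A with hS
  set T := adjoint B with hT
  -- Key norm inequality
  have key : ∀ u : H, ‖S u‖ ≤ k * ‖T u‖ := by
    intro u
    have h2 := h.2 u
    have : ((((k : ℂ) ^ 2) • (B ∘L T) - A ∘L S).reApplyInnerSelf u)
        = k ^ 2 * ‖T u‖ ^ 2 - ‖S u‖ ^ 2 := by
      rw [reApplyInnerSelf_apply]
      simp only [sub_apply, smul_apply, comp_apply, inner_sub_left, inner_smul_left]
      rw [← adjoint_inner_right B (T u) u, ← adjoint_inner_right A (S u) u, ← hT, ← hS]
      simp [inner_self_eq_norm_sq_to_K, ← Complex.ofReal_pow]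
    rw [this] at h2
    nlinarith [norm_nonneg (S u), norm_nonneg (T u), mul_nonneg hk (norm_nonneg (T u))]
  have hwd : ∀ u u' : H, T u = T u' → S u = S u' := by
    intro u u' huu
    have : ‖S u - S u'‖ ≤ k * ‖T u - T u'‖ := by
      rw [← map_sub, ← map_sub]; exact key _
    rw [huu, sub_self, norm_zero, mul_zero] at this
    have := le_antisymm this (norm_nonneg _)
    rwa [norm_eq_zero, sub_eq_zero] at this
  rintro _ ⟨x, rfl⟩
  -- the functional on range T
  set K : Submodule ℂ H := LinearMap.range (T : H →ₗ[ℂ] H) with hK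
  have memK : ∀ u : H, T u ∈ K := fun u => ⟨u, rfl⟩
  have choice : ∀ v : K, ∃ u : H, T u = (v : H) := fun v => v.2
  set F : K → ℂ := fun v => ⟪x, S (choice v).choose⟫_ℂ with hF
  have hFeq : ∀ (v : K) (u : H), T u = (v : H) → F v = ⟪x, S u⟫_ℂ := by
    intro v u hu
    have := hwd (choice v).choose u ((choice v).choose_spec.trans hu.symm)
    show ⟪x, S (choice v).choose⟫_ℂ = ⟪x, S u⟫_ℂ
    rw [this]
  have Fadd : ∀ v w : K, F (v + w) = F v + F w := by
    intro v w
    obtain ⟨uv, huv⟩ := choice v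
    obtain ⟨uw, huw⟩ := choice w
    rw [hFeq v uv huv, hFeq w uw huw, hFeq (v + w) (uv + uw) (by simp [huv, huw]),
      map_add, inner_add_right]
  have Fsmul : ∀ (c : ℂ) (v : K), F (c • v) = c * F v := by
    intro c v
    obtain ⟨uv, huv⟩ := choice v
    rw [hFeq v uv huv, hFeq (c • v) (c • uv) (by simp [huv]), map_smul, inner_smul_right]
  set ℓ : K →L[ℂ] ℂ := LinearMap.mkContinuous
    { toFun := F, map_add' := Fadd, map_smul' := Fsmul } (k * ‖x‖) (by
      intro v
      obtain ⟨uv, huv⟩ := choice v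
      simp only [LinearMap.coe_mk, AddHom.coe_mk]
      rw [hFeq v uv huv]
      calc ‖⟪x, S uv⟫_ℂ‖ ≤ ‖x‖ * ‖S uv‖ := norm_inner_le_norm _ _
        _ ≤ ‖x‖ * (k * ‖T uv‖) := by
            exact mul_le_mul_of_nonneg_left (key uv) (norm_nonneg x)
        _ = k * ‖x‖ * ‖(v : H)‖ := by rw [huv]; ring
        _ = k * ‖x‖ * ‖v‖ := rfl) with hl
  obtain ⟨g, hg, -⟩ := exists_extension_norm_eq K ℓ
  set z := (InnerProductSpace.toDual ℂ H).symm g with hz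
  refine ⟨z, ?_⟩
  refine ext_inner_right ℂ (fun u => ?_)
  have h1 : ⟪B z, u⟫_ℂ = ⟪z, T u⟫_ℂ := (adjoint_inner_right B z u).symm
  have h2 : ⟪z, T u⟫_ℂ = g (T u) := InnerProductSpace.toDual_symm_apply
  have h3 : g (T u) = ℓ ⟨T u, memK u⟩ := hg ⟨T u, memK u⟩
  have h4 : ℓ ⟨T u, memK u⟩ = ⟪x, S u⟫_ℂ := hFeq ⟨T u, memK u⟩ u rfl
  have h5 : ⟪x, S u⟫_ℂ = ⟪A x, u⟫_ℂ := adjoint_inner_right A x u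
  rw [h1, h2, h3, h4, h5]
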